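/- arXiv:math/0502134 — 2 statements merged into one kernel-verified Lean document; each statement's English description precedes it below -/
import Mathlib

section
/- (E^{(k)} is a distribution.) For all integers k ≥ 0, f ≥ 1, N ≥ 0 and all integers x ≥ 0: Σ_{i=0}^{p−1} E^{(k)}_{u:a_1,q}(x + i·f·p^N ; f·p^{N+1}) = E^{(k)}_{u:a_1,q}(x ; f·p^N). -/
open Filter Finset Topology IsUltrametricDist

/-- For `q` in a normed field and a `p`-adic integer `z`, the power `q^z`, defined as the
limit of `q^(z mod p^N)` (for convergent `q` this agrees with `exp_p (z · log_p q)`). -/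
noncomputable def qpow {p : ℕ} [Fact p.Prime] {K : Type*} [NormedField K] (q : K) (z : ℤ_[p]) :
    K :=
  limUnder atTop fun N : ℕ => q ^ (z.appr N)


section Aux
variable {p : ℕ} [hp : Fact p.Prime] {K : Type*} [NormedField K] [IsUltrametricDist K]

lemma aux_norm_sub_le_max (a b : K) : ‖a - b‖ ≤ max ‖a‖ ‖b‖ := by
  simpa [sub_eq_add_neg] using norm_add_le_max a (-b)

lemma aux_norm_le_one {y : K} (hy : ‖y - 1‖ < 1) : ‖y‖ ≤ 1 := by
  have := norm_add_le_max (y - 1) 1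
  simpa using this.trans (by simp [hy.le])

lemma aux_pow_sub_one {y : K} (hy : ‖y - 1‖ < 1) (m : ℕ) : ‖y ^ m - 1‖ ≤ ‖y - 1‖ := by
  induction m with
  | zero => simp
  | succ m ih =>
    have h1 : y ^ (m + 1) - 1 = y ^ m * (y - 1) + (y ^ m - 1) := by ring
    rw [h1]
    refine (norm_add_le_max _ _).trans (max_le ?_ ih)
    rw [norm_mul]
    calc ‖y ^ m‖ * ‖y - 1‖ ≤ 1 * ‖y - 1‖ := by
          gcongr
          exact (norm_pow_le y m).trans (by simpa using pow_le_one₀ (norm_nonneg y) (aux_norm_le_one hy))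
      _ = ‖y - 1‖ := one_mul _
end Aux

section Aux2
variable {p : ℕ} [hp : Fact p.Prime] {K : Type*} [NormedField K] [IsUltrametricDist K]

lemma aux_pow_p (hpK : ‖(p : K)‖ = (p : ℝ)⁻¹) {ε : ℝ} (hε : ε < 1)
    {y : K} (hy : ‖y - 1‖ ≤ ε) :
    ‖y ^ p - 1‖ ≤ max (p : ℝ)⁻¹ (ε ^ (p - 1)) * ‖y - 1‖ := by
  have hε0 : 0 ≤ ε := le_trans (norm_nonneg _) hy
  have hy1 : ‖y - 1‖ < 1 := lt_of_le_of_lt hy hε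
  set t : K := y - 1 with ht
  have hyt : y = t + 1 := by rw [ht]; ring
  have hexp : y ^ p - 1 = ∑ i ∈ range p, t ^ (i + 1) * (p.choose (i + 1) : K) := by
    rw [hyt, add_pow]
    rw [Finset.sum_range_succ']
    simp [mul_comm]
  rw [hexp]
  refine norm_sum_le_of_forall_le_of_nonneg ?_ ?_
  · positivity
  · intro i hi
    rw [Finset.mem_range] at hi
    rw [norm_mul]
    rcases lt_or_eq_of_le (Nat.succ_le_of_lt hi) with hlt | heq
    · -- i + 1 < p : use p ∣ choose
      obtain ⟨m, hm⟩ := hp.out.dvd_choose_self (Nat.succ_ne_zero i) hlt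
      have hnorm : ‖(p.choose (i + 1) : K)‖ ≤ (p : ℝ)⁻¹ := by
        rw [hm]
        push_cast
        rw [norm_mul, hpK]
        calc (p:ℝ)⁻¹ * ‖(m : K)‖ ≤ (p:ℝ)⁻¹ * 1 := by
              gcongr; exact norm_natCast_le_one K m
          _ = (p:ℝ)⁻¹ := mul_one _
      calc ‖t ^ (i+1)‖ * ‖(p.choose (i+1) : K)‖
          ≤ ‖t‖ ^ (i+1) * (p:ℝ)⁻¹ := by
            gcongr; exact norm_pow_le t (i+1)
        _ ≤ ‖t‖ * (p:ℝ)⁻¹ := by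
            gcongr ?_ * _
            calc ‖t‖ ^ (i+1) ≤ ‖t‖ ^ 1 :=
                  pow_le_pow_of_le_one (norm_nonneg _) hy1.le (Nat.one_le_iff_ne_zero.2 (Nat.succ_ne_zero i))
              _ = ‖t‖ := pow_one _
        _ = (p:ℝ)⁻¹ * ‖t‖ := mul_comm _ _
        _ ≤ max (p : ℝ)⁻¹ (ε ^ (p - 1)) * ‖t‖ := by gcongr; exact le_max_left _ _
    · -- i + 1 = p
      have hip : i = p - 1 := by omega
      have hch : (p.choose (i+1) : K) = 1 := by
        rw [show i + 1 = p by omega, Nat.choose_self]; norm_num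
      rw [hch, norm_one, mul_one]
      calc ‖t ^ (i+1)‖ ≤ ‖t‖ ^ (i+1) := norm_pow_le t (i+1)
        _ = ‖t‖ ^ i * ‖t‖ := by rw [pow_succ]
        _ ≤ ε ^ (p-1) * ‖t‖ := by
            rw [hip]
            exact mul_le_mul_of_nonneg_right (pow_le_pow_left₀ (norm_nonneg _) hy _) (norm_nonneg _)
        _ ≤ max (p : ℝ)⁻¹ (ε ^ (p - 1)) * ‖t‖ := by gcongr; exact le_max_right _ _

lemma aux_pow_ppow (hpK : ‖(p : K)‖ = (p : ℝ)⁻¹) {ε : ℝ} (hε : ε < 1)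
    (n : ℕ) {y : K} (hy : ‖y - 1‖ ≤ ε) :
    ‖y ^ (p ^ n) - 1‖ ≤ (max (p : ℝ)⁻¹ (ε ^ (p - 1))) ^ n * ‖y - 1‖ := by
  have hε0 : 0 ≤ ε := le_trans (norm_nonneg _) hy
  set c : ℝ := max (p : ℝ)⁻¹ (ε ^ (p - 1)) with hc
  have hc0 : 0 ≤ c := le_trans (by positivity) (le_max_left _ _)
  have hc1 : c ≤ 1 := by
    apply max_le
    · rw [inv_le_one_iff₀]; right; exact_mod_cast hp.out.one_le
    · exact pow_le_one₀ hε0 hε.le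
  induction n generalizing y with
  | zero => simp only [pow_zero, pow_one]; simpa using hy
  | succ n ih =>
    have h1 : ‖y ^ p - 1‖ ≤ c * ‖y - 1‖ := aux_pow_p hpK hε hy
    have h2 : ‖y ^ p - 1‖ ≤ ε := by
      calc ‖y ^ p - 1‖ ≤ c * ‖y - 1‖ := h1
        _ ≤ 1 * ε := by gcongr
        _ = ε := one_mul _
    have h3 := ih h2
    calc ‖y ^ (p ^ (n+1)) - 1‖ = ‖(y ^ p) ^ (p ^ n) - 1‖ := by
          rw [← pow_mul, pow_succ, mul_comm (p^n) p]
      _ ≤ c ^ n * ‖y ^ p - 1‖ := h3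
      _ ≤ c ^ n * (c * ‖y - 1‖) := by gcongr
      _ = c ^ (n+1) * ‖y - 1‖ := by ring
end Aux2

section Aux3
variable {p : ℕ} [hp : Fact p.Prime] {K : Type*} [NormedField K] [IsUltrametricDist K]
  {q : K}

lemma aux_congr_est (hpK : ‖(p : K)‖ = (p : ℝ)⁻¹) (hq : ‖q - 1‖ < 1)
    {a b n : ℕ} (hba : b ≤ a) (hdvd : p ^ n ∣ a - b) :
    ‖q ^ a - q ^ b‖ ≤ (max (p : ℝ)⁻¹ (‖q - 1‖ ^ (p - 1))) ^ n * ‖q - 1‖ := by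
  set c : ℝ := max (p : ℝ)⁻¹ (‖q - 1‖ ^ (p - 1)) with hc
  have hc0 : 0 ≤ c := le_trans (by positivity) (le_max_left _ _)
  have hc1 : c ≤ 1 := by
    apply max_le
    · rw [inv_le_one_iff₀]; right; exact_mod_cast hp.out.one_le
    · exact pow_le_one₀ (norm_nonneg _) hq.le
  obtain ⟨e, he⟩ := hdvd
  have ha : a = b + p ^ n * e := by omega
  have hfac : q ^ a - q ^ b = q ^ b * ((q ^ (p ^ n)) ^ e - 1) := by
    rw [ha, pow_add, pow_mul]; ring
  have hppow : ‖q ^ (p ^ n) - 1‖ ≤ c ^ n * ‖q - 1‖ := aux_pow_ppow hpK hq n (le_refl ‖q - 1‖)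
  have hppow1 : ‖q ^ (p ^ n) - 1‖ < 1 := by
    calc ‖q ^ (p ^ n) - 1‖ ≤ c ^ n * ‖q - 1‖ := hppow
      _ ≤ 1 * ‖q - 1‖ := by gcongr; exact pow_le_one₀ hc0 hc1
      _ < 1 := by rw [one_mul]; exact hq
  rw [hfac, norm_mul]
  calc ‖q ^ b‖ * ‖(q ^ (p ^ n)) ^ e - 1‖
      ≤ 1 * ‖q ^ (p ^ n) - 1‖ :=
        mul_le_mul ((norm_pow_le q b).trans (pow_le_one₀ (norm_nonneg _) (aux_norm_le_one hq)))
          (aux_pow_sub_one hppow1 e) (norm_nonneg _) zero_le_one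
    _ = ‖q ^ (p ^ n) - 1‖ := one_mul _
    _ ≤ c ^ n * ‖q - 1‖ := hppow

lemma aux_congr_est' (hpK : ‖(p : K)‖ = (p : ℝ)⁻¹) (hq : ‖q - 1‖ < 1)
    {a b n : ℕ} (hdvd : (p : ℤ) ^ n ∣ (a : ℤ) - b) :
    ‖q ^ a - q ^ b‖ ≤ (max (p : ℝ)⁻¹ (‖q - 1‖ ^ (p - 1))) ^ n * ‖q - 1‖ := by
  rcases le_total b a with h | h
  · have h2 : p ^ n ∣ a - b := by
      have : ((p ^ n : ℕ) : ℤ) ∣ ((a - b : ℕ) : ℤ) := by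
        rw [Int.natCast_sub h]; exact_mod_cast hdvd
      exact_mod_cast this
    exact aux_congr_est hpK hq h h2
  · have h2 : p ^ n ∣ b - a := by
      have : ((p ^ n : ℕ) : ℤ) ∣ ((b - a : ℕ) : ℤ) := by
        rw [Int.natCast_sub h]
        exact_mod_cast dvd_sub_comm.mp hdvd
      exact_mod_cast this
    rw [← norm_neg, neg_sub]
    exact aux_congr_est hpK hq h h2

end Aux3

section Qpow
variable {p : ℕ} [hp : Fact p.Prime] {K : Type*} [NormedField K] [CompleteSpace K]
  [IsUltrametricDist K] {q : K}

lemma aux_c_lt_one (hq : ‖q - 1‖ < 1) : max (p : ℝ)⁻¹ (‖q - 1‖ ^ (p - 1)) < 1 := by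
  apply max_lt
  · rw [inv_lt_one_iff₀]; right; exact_mod_cast hp.out.one_lt
  · exact pow_lt_one₀ (norm_nonneg _) hq (by have := hp.out.two_le; omega)

lemma tendsto_qpow (hpK : ‖(p : K)‖ = (p : ℝ)⁻¹) (hq : ‖q - 1‖ < 1) (z : ℤ_[p]) :
    Tendsto (fun n : ℕ => q ^ z.appr n) atTop (𝓝 (qpow q z)) := by
  set c : ℝ := max (p : ℝ)⁻¹ (‖q - 1‖ ^ (p - 1)) with hc
  have hcauchy : CauchySeq (fun n : ℕ => q ^ z.appr n) := by
    apply cauchySeq_of_le_geometric c ‖q - 1‖ (aux_c_lt_one hq)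
    intro n
    rw [dist_eq_norm, norm_sub_rev]
    have := aux_congr_est hpK hq (z.appr_mono (Nat.le_succ n)) (z.dvd_appr_sub_appr n (n+1) (Nat.le_succ n))
    calc ‖q ^ z.appr (n+1) - q ^ z.appr n‖ ≤ c ^ n * ‖q - 1‖ := this
      _ = ‖q - 1‖ * c ^ n := mul_comm _ _
  obtain ⟨L, hL⟩ := cauchySeq_tendsto_of_complete hcauchy
  rwa [qpow, hL.limUnder_eq]

lemma tendsto_qpow_of_congr (hpK : ‖(p : K)‖ = (p : ℝ)⁻¹) (hq : ‖q - 1‖ < 1) (z : ℤ_[p])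
    (a : ℕ → ℕ) (ha : ∀ n, ((a n : ℤ_[p])) - z ∈ Ideal.span {(p : ℤ_[p]) ^ n}) :
    Tendsto (fun n : ℕ => q ^ a n) atTop (𝓝 (qpow q z)) := by
  set c : ℝ := max (p : ℝ)⁻¹ (‖q - 1‖ ^ (p - 1)) with hc
  have hc0 : 0 ≤ c := le_trans (by positivity) (le_max_left _ _)
  have hdiff : Tendsto (fun n : ℕ => q ^ a n - q ^ z.appr n) atTop (𝓝 0) := by
    apply squeeze_zero_norm (a := fun n : ℕ => c ^ n * ‖q - 1‖)
    · intro n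
      apply aux_congr_est' hpK hq
      have h1 := ha n
      have h2 := z.appr_spec n
      have h3 : ((a n : ℤ_[p]) - (z.appr n : ℤ_[p])) ∈ Ideal.span {(p : ℤ_[p]) ^ n} := by
        have := Ideal.add_mem _ h1 h2
        convert this using 1; ring
      rw [show ((a n : ℤ_[p]) - (z.appr n : ℤ_[p])) = (((a n : ℤ) - (z.appr n : ℤ) : ℤ) : ℤ_[p])
        by push_cast; ring, Ideal.mem_span_singleton] at h3
      have := (PadicInt.pow_p_dvd_int_iff n _).mp h3
      exact_mod_cast this
    · have := (tendsto_pow_atTop_nhds_zero_of_lt_one hc0 (aux_c_lt_one hq)).mul_const ‖q - 1‖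
      simpa using this
  have hsum := (tendsto_qpow hpK hq z).add hdiff
  simp only [add_zero] at hsum
  convert hsum using 2 with n
  ring

lemma qpow_natCast_mul (hpK : ‖(p : K)‖ = (p : ℝ)⁻¹) (hq : ‖q - 1‖ < 1) (z : ℤ_[p]) (m : ℕ) :
    qpow q ((m : ℤ_[p]) * z) = (qpow q z) ^ m := by
  have h1 : Tendsto (fun n : ℕ => q ^ (m * z.appr n)) atTop (𝓝 (qpow q ((m : ℤ_[p]) * z))) := by
    apply tendsto_qpow_of_congr hpK hq
    intro n
    have h2 := z.appr_spec n
    rw [show ((m * z.appr n : ℕ) : ℤ_[p]) - (m : ℤ_[p]) * z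
        = (m : ℤ_[p]) * -(z - (z.appr n : ℤ_[p])) by push_cast; ring]
    exact Ideal.mul_mem_left _ _ (Submodule.neg_mem _ h2)
  have h3 : Tendsto (fun n : ℕ => (q ^ z.appr n) ^ m) atTop (𝓝 ((qpow q z) ^ m)) :=
    (tendsto_qpow hpK hq z).pow m
  have h4 : (fun n : ℕ => q ^ (m * z.appr n)) = fun n : ℕ => (q ^ z.appr n) ^ m := by
    funext n; rw [← pow_mul, mul_comm]
  rw [h4] at h1
  exact tendsto_nhds_unique h1 h3

lemma qpow_sub_one_norm (hpK : ‖(p : K)‖ = (p : ℝ)⁻¹) (hq : ‖q - 1‖ < 1) (z : ℤ_[p]) :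
    ‖qpow q z - 1‖ ≤ ‖q - 1‖ := by
  have h1 : Tendsto (fun n : ℕ => ‖q ^ z.appr n - 1‖) atTop (𝓝 ‖qpow q z - 1‖) :=
    ((tendsto_qpow hpK hq z).sub_const 1).norm
  exact le_of_tendsto h1 (Eventually.of_forall fun n => aux_pow_sub_one hq _)

end Qpow

/-- The `q`-number `[z : q] = (1 - q^z)/(1 - q)` for a `p`-adic integer `z`. -/
noncomputable def qnum {p : ℕ} [Fact p.Prime] {K : Type*} [NormedField K] (q : K) (z : ℤ_[p]) :
    K :=
  (1 - qpow q z) / (1 - q)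

/-- The `q`-analogue of the Euler–Barnes polynomial
`H_n^{(r)}(w, u, q | a_1, …, a_r)
  = (1-u)^r (1-q)^{-n} ∑_{l=0}^n C(n,l) (-1)^l q^{lw} ∏_j (1 - q^{l a_j} u)⁻¹`. -/
noncomputable def qEulerBarnes {p : ℕ} [Fact p.Prime] {K : Type*} [NormedField K]
    (r n : ℕ) (w : ℤ_[p]) (u q : K) (a : Fin r → ℤ_[p]) : K :=
  (1 - u) ^ r * ((1 - q)⁻¹) ^ n *
    ∑ l ∈ Finset.range (n + 1),
      (n.choose l : K) * (-1) ^ l * qpow q ((l : ℤ_[p]) * w) *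
        ∏ j, (1 - qpow q ((l : ℤ_[p]) * a j) * u)⁻¹

/-- The paper's distribution `E^{(k)}_{u:a_1,q}(x + M ℤ_p)` from formula (3):
`E^{(k)}(x; M) = u^x (1-q)^{-k} ∑_{l=0}^k C(k,l)(-1)^l q^{l a_1 x} (1 - q^{l a_1 M} u^M)⁻¹`. -/
noncomputable def Emeas {p : ℕ} [Fact p.Prime] {K : Type*} [NormedField K]
    (u q : K) (a1 : ℤ_[p]) (k M x : ℕ) : K :=
  u ^ x * ((1 - q)⁻¹) ^ k *
    ∑ l ∈ Finset.range (k + 1),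
      (k.choose l : K) * (-1) ^ l * qpow q (((l * x : ℕ) : ℤ_[p]) * a1) *
        (1 - qpow q (((l * M : ℕ) : ℤ_[p]) * a1) * u ^ M)⁻¹

/-- **`E^{(k)}` is a distribution.** For all `k ≥ 0`, `f ≥ 1`, `N ≥ 0`, `x ≥ 0`:
`∑_{i=0}^{p-1} E^{(k)}_{u:a_1,q}(x + i f p^N ; f p^{N+1}) = E^{(k)}_{u:a_1,q}(x ; f p^N)`. -/
theorem Emeas_distribution
    {p : ℕ} [Fact p.Prime] {K : Type*} [NormedField K] [CompleteSpace K]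
    [IsUltrametricDist K] (hpK : ‖(p : K)‖ = (p : ℝ)⁻¹)
    (a1 : ℤ_[p]) (ha1 : a1 ≠ 0)
    (u q : K) (hu : ∀ f : ℕ, 1 ≤ f → 1 ≤ ‖1 - u ^ f‖)
    (hq0 : 0 < ‖1 - q‖) (hq1 : ‖1 - q‖ < (p : ℝ) ^ (-(1 : ℝ) / ((p : ℝ) - 1)))
    (k f N x : ℕ) (hf : 1 ≤ f) :
    ∑ i ∈ Finset.range p, Emeas u q a1 k (f * p ^ (N + 1)) (x + i * f * p ^ N) =
      Emeas u q a1 k (f * p ^ N) x := by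
  
  have hpp : p.Prime := Fact.out
  have hq1' : ‖q - 1‖ < 1 := by
    rw [norm_sub_rev]
    have h1 : (1 : ℝ) < p := by exact_mod_cast hpp.one_lt
    exact hq1.trans (Real.rpow_lt_one_of_one_lt_of_neg h1
      (div_neg_of_neg_of_pos (by norm_num) (by linarith)))
  simp only [Emeas, qpow_natCast_mul hpK hq1']
  set Q : K := qpow q a1 with hQdef
  have hQ : ‖Q - 1‖ < 1 := lt_of_le_of_lt (qpow_sub_one_norm hpK hq1' a1) hq1'
  have hne : ∀ j m : ℕ, 1 ≤ m → (1 : K) - Q ^ j * u ^ m ≠ 0 := by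
    intro j m hm h0
    have hB : 1 ≤ ‖(1 : K) - u ^ m‖ := hu m hm
    have hQj : ‖Q ^ j - 1‖ < 1 := lt_of_le_of_lt (aux_pow_sub_one hQ j) hQ
    have hum : ‖u ^ m‖ ≤ ‖(1 : K) - u ^ m‖ := by
      calc ‖u ^ m‖ = ‖(u ^ m - 1) + 1‖ := by rw [sub_add_cancel]
        _ ≤ max ‖u ^ m - 1‖ ‖(1 : K)‖ := IsUltrametricDist.norm_add_le_max _ _
        _ = max ‖u ^ m - 1‖ 1 := by rw [norm_one]
        _ ≤ ‖(1 : K) - u ^ m‖ := max_le (le_of_eq (norm_sub_rev _ _)) hB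
    have hkey : (1 : K) - u ^ m = (Q ^ j - 1) * u ^ m := by linear_combination h0
    have hcontra : ‖(1 : K) - u ^ m‖ < ‖(1 : K) - u ^ m‖ := by
      conv_lhs => rw [hkey]
      rw [norm_mul]
      calc ‖Q ^ j - 1‖ * ‖u ^ m‖ ≤ ‖Q ^ j - 1‖ * ‖(1 : K) - u ^ m‖ := by
            gcongr
        _ < 1 * ‖(1 : K) - u ^ m‖ :=
            mul_lt_mul_of_pos_right hQj (lt_of_lt_of_le one_pos hB)
        _ = ‖(1 : K) - u ^ m‖ := one_mul _
    exact lt_irrefl _ hcontra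
  have hM1 : 1 ≤ f * p ^ N := Nat.one_le_iff_ne_zero.2
    (Nat.pos_iff_ne_zero.mp (Nat.mul_pos hf (pow_pos hpp.pos N)))
  have hM1' : 1 ≤ f * p ^ (N + 1) := Nat.one_le_iff_ne_zero.2
    (Nat.pos_iff_ne_zero.mp (Nat.mul_pos hf (pow_pos hpp.pos (N + 1))))
  simp only [Finset.mul_sum]
  rw [Finset.sum_comm]
  refine Finset.sum_congr rfl fun l hl => ?_
  set T : K := Q ^ (l * (f * p ^ N)) * u ^ (f * p ^ N) with hT
  have e1 : l * (f * p ^ (N + 1)) = l * (f * p ^ N) * p := by ring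
  have e2 : f * p ^ (N + 1) = f * p ^ N * p := by ring
  have hTp4 : Q ^ (l * (f * p ^ (N + 1))) * u ^ (f * p ^ (N + 1)) = T ^ p := by
    rw [e1, e2, hT, mul_pow, ← pow_mul, ← pow_mul]
  have hT1 : (1 : K) - T ≠ 0 := by rw [hT]; exact hne _ _ hM1
  have hTpne : (1 : K) - T ^ p ≠ 0 := by rw [← hTp4]; exact hne _ _ hM1'
  have hgeom : (∑ i ∈ Finset.range p, T ^ i) = (1 - T ^ p) * (1 - T)⁻¹ := by
    rw [eq_mul_inv_iff_mul_eq₀ hT1]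
    linear_combination (-1 : K) * geom_sum_mul T p
  calc ∑ i ∈ Finset.range p, u ^ (x + i * f * p ^ N) * ((1 - q)⁻¹) ^ k *
        ((k.choose l : K) * (-1) ^ l * Q ^ (l * (x + i * f * p ^ N)) *
          (1 - Q ^ (l * (f * p ^ (N + 1))) * u ^ (f * p ^ (N + 1)))⁻¹)
      = ∑ i ∈ Finset.range p, (u ^ x * ((1 - q)⁻¹) ^ k *
          ((k.choose l : K) * (-1) ^ l * Q ^ (l * x)) * (1 - T ^ p)⁻¹) * T ^ i := by
        refine Finset.sum_congr rfl fun i _ => ?_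
        rw [hTp4, hT,
          show x + i * f * p ^ N = x + f * p ^ N * i from by ring, pow_add, pow_mul,
          show l * (x + f * p ^ N * i) = l * x + l * (f * p ^ N) * i from by ring,
          pow_add, pow_mul]
        ring
    _ = (u ^ x * ((1 - q)⁻¹) ^ k * ((k.choose l : K) * (-1) ^ l * Q ^ (l * x)) *
          (1 - T ^ p)⁻¹) * ∑ i ∈ Finset.range p, T ^ i := by rw [← Finset.mul_sum]
    _ = u ^ x * ((1 - q)⁻¹) ^ k * ((k.choose l : K) * (-1) ^ l * Q ^ (l * x) *
          (1 - T)⁻¹) := by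
        rw [hgeom, mul_assoc _ ((1 - T ^ p)⁻¹), ← mul_assoc ((1 - T ^ p)⁻¹),
          inv_mul_cancel₀ hTpne, one_mul]
        ring
end

section
/- For all integers f ≥ 1, N ≥ 0, i ≥ 0 and every integer x with 0 ≤ x < f·p^N: |u^x · (1−u^{f·p^N})^{−1} · H_i^{(1)}(u^{f·p^N}, q^{f·p^N} | a_1)|_p ≤ 1, where H_i^{(1)}(U, Q | a_1) := (1−U)(1−Q)^{−i} Σ_{l=0}^i binom(i,l)(−1)^l (1−Q^{l·a_1}U)^{−1} with U = u^{f·p^N} and Q = q^{f·p^N}. -/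
open Filter Finset

/-!
Put `r = Q^{a₁}`. In an ultrametric field with `‖p‖ < 1`, `‖1 - Q^{p^N}‖ → 0`, so `Q^z` is a
genuine limit; hence `Q^{l a₁} = r^l` and `‖1 - r‖ ≤ ‖1 - Q‖`. Write
`1 - r^l U = (1 - U)(1 - c (r^l - 1))` with `c = U/(1 - U)`, where `‖c‖ ≤ 1` because
`1 ≤ ‖1 - U‖`. Expanding `(1 - c (r^l - 1))⁻¹` geometrically to order `i`, the alternating binomial
sum sends each sequence `l ↦ r^{s l}` to `(1 - r^s)^i`, of norm at most `‖1 - r‖^i`, and the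
remainder is already that small. So `‖(1 - Q)^{-i} ∑ …‖ ≤ ‖1 - U‖⁻¹`, while `‖u‖^x ≤ ‖1 - U‖`
for `x < f p^N`.
-/

open Topology IsUltrametricDist


section Ultrametric

variable {K : Type*} [NormedField K] [IsUltrametricDist K]

lemma norm_le_max_one_norm_one_sub (x : K) : ‖x‖ ≤ max 1 ‖1 - x‖ := by
  simpa [norm_sub_rev] using norm_add_le_max (1 : K) (-(1 - x))

lemma norm_le_one_of_norm_one_sub_le_one {x : K} (h : ‖1 - x‖ ≤ 1) : ‖x‖ ≤ 1 :=
  (norm_le_max_one_norm_one_sub x).trans (max_le le_rfl h)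

lemma norm_le_norm_one_sub_of_one_le {x : K} (h : 1 ≤ ‖1 - x‖) : ‖x‖ ≤ ‖1 - x‖ :=
  (norm_le_max_one_norm_one_sub x).trans (max_le h le_rfl)

lemma norm_one_sub_pow_le {r : K} (hr : ‖r‖ ≤ 1) (n : ℕ) : ‖1 - r ^ n‖ ≤ ‖1 - r‖ := by
  have h : 1 - r ^ n = (∑ k ∈ range n, r ^ k) * (1 - r) := by
    linear_combination geom_sum_mul r n
  rw [h, norm_mul]
  refine mul_le_of_le_one_left (norm_nonneg _) ?_
  exact norm_sum_le_of_forall_le_of_nonneg zero_le_one fun k _ => by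
    simpa using pow_le_one₀ (norm_nonneg r) hr

lemma norm_pow_sub_pow_le_of_modEq {Q : K} (hQ : ‖Q‖ ≤ 1) {a b M : ℕ} (h : a ≡ b [MOD M]) :
    ‖Q ^ a - Q ^ b‖ ≤ ‖1 - Q ^ M‖ := by
  wlog hba : b ≤ a generalizing a b
  · rw [norm_sub_rev]
    exact this h.symm (le_of_not_ge hba)
  obtain ⟨k, hk⟩ := (Nat.modEq_iff_dvd' hba).mp h.symm
  obtain rfl : a = b + M * k := by omega
  calc ‖Q ^ (b + M * k) - Q ^ b‖ = ‖Q‖ ^ b * ‖1 - (Q ^ M) ^ k‖ := by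
        rw [← norm_pow, ← norm_mul, ← norm_neg, pow_add, pow_mul]
        ring_nf
    _ ≤ ‖1 - Q ^ M‖ :=
        mul_le_of_le_one_left (norm_nonneg _) (pow_le_one₀ (norm_nonneg _) hQ) |>.trans
          (norm_one_sub_pow_le (by simpa using pow_le_one₀ (norm_nonneg _) hQ) k)

lemma norm_one_sub_pow_prime_le {p : ℕ} (hp : p.Prime) {Q : K} (hQ : ‖1 - Q‖ ≤ 1) :
    ‖1 - Q ^ p‖ ≤ max ‖(p : K)‖ (‖1 - Q‖ ^ (p - 1)) * ‖1 - Q‖ := by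
  set t := Q - 1
  have ht : ‖t‖ = ‖1 - Q‖ := norm_sub_rev _ _
  have hexp : Q ^ p - 1 = ∑ k ∈ range p, t ^ (k + 1) * (p.choose (k + 1) : K) := by
    rw [show Q = t + 1 by ring, add_pow, sum_range_succ']
    simp
  rw [norm_sub_rev, hexp, ← ht]
  rw [← ht] at hQ
  refine norm_sum_le_of_forall_le_of_nonneg (by positivity) fun k hk => ?_
  rw [norm_mul, norm_pow]
  rcases (show k + 1 ≤ p from mem_range.mp hk).eq_or_lt with hkp | hkp
  · rw [hkp, Nat.choose_self, Nat.cast_one, norm_one, mul_one]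
    calc ‖t‖ ^ p = ‖t‖ ^ (p - 1) * ‖t‖ := by rw [← pow_succ, Nat.sub_add_cancel hp.one_le]
      _ ≤ _ := by gcongr; exact le_max_right _ _
  · obtain ⟨c, hc⟩ := hp.dvd_choose_self k.succ_ne_zero hkp
    calc ‖t‖ ^ (k + 1) * ‖(p.choose (k + 1) : K)‖ ≤ ‖t‖ * ‖(p : K)‖ := by
          gcongr
          · exact pow_le_of_le_one (norm_nonneg _) hQ k.succ_ne_zero
          · rw [hc, Nat.cast_mul, norm_mul]
            exact mul_le_of_le_one_right (norm_nonneg _) (norm_natCast_le_one K c)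
      _ ≤ _ := by rw [mul_comm]; gcongr; exact le_max_left _ _

lemma tendsto_norm_one_sub_pow_prime_pow {p : ℕ} (hp : p.Prime) (hpK : ‖(p : K)‖ < 1) {Q : K}
    (hQ : ‖1 - Q‖ < 1) : Tendsto (fun N : ℕ => ‖1 - Q ^ p ^ N‖) atTop (𝓝 0) := by
  set c := max ‖(p : K)‖ (‖1 - Q‖ ^ (p - 1))
  have hc : c < 1 :=
    max_lt hpK (pow_lt_one₀ (norm_nonneg _) hQ (by have := hp.two_le; omega))
  have hQ1 : ‖Q‖ ≤ 1 := norm_le_one_of_norm_one_sub_le_one hQ.le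
  have hcontract : ∀ N, ‖1 - Q ^ p ^ N‖ ≤ c ^ N * ‖1 - Q‖ := by
    intro N
    induction N with
    | zero => simp
    | succ N ih =>
      have hle : ‖1 - Q ^ p ^ N‖ ≤ ‖1 - Q‖ := norm_one_sub_pow_le hQ1 _
      calc ‖1 - Q ^ p ^ (N + 1)‖ = ‖1 - (Q ^ p ^ N) ^ p‖ := by rw [← pow_mul, ← pow_succ]
        _ ≤ max ‖(p : K)‖ (‖1 - Q ^ p ^ N‖ ^ (p - 1)) * ‖1 - Q ^ p ^ N‖ :=
          norm_one_sub_pow_prime_le hp (hle.trans hQ.le)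
        _ ≤ c * (c ^ N * ‖1 - Q‖) := by
          gcongr
          exact max_le_max le_rfl (by gcongr)
        _ = c ^ (N + 1) * ‖1 - Q‖ := by ring
  refine squeeze_zero (fun _ => norm_nonneg _) hcontract ?_
  simpa using (tendsto_pow_atTop_nhds_zero_of_lt_one (by positivity) hc).mul_const ‖1 - Q‖

lemma norm_pow_le_norm_one_sub_pow {u : K} {x m : ℕ} (hxm : x ≤ m) (hu : 1 ≤ ‖1 - u ^ m‖) :
    ‖u‖ ^ x ≤ ‖1 - u ^ m‖ := by
  rcases le_or_gt ‖u‖ 1 with h | h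
  · exact (pow_le_one₀ (norm_nonneg _) h).trans hu
  · calc ‖u‖ ^ x ≤ ‖u ^ m‖ := by rw [norm_pow]; exact pow_le_pow_right₀ h.le hxm
      _ ≤ ‖1 - u ^ m‖ := norm_le_norm_one_sub_of_one_le hu

end Ultrametric

section Padic

variable {p : ℕ} [Fact p.Prime]

lemma PadicInt.norm_appr_sub_le (z : ℤ_[p]) (N : ℕ) :
    ‖(z.appr N : ℤ_[p]) - z‖ ≤ (p : ℝ) ^ (-N : ℤ) := by
  rw [norm_sub_rev]
  exact (PadicInt.norm_le_pow_iff_mem_span_pow _ N).mpr (z.appr_spec N)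

lemma PadicInt.natCast_modEq_of_norm_sub_le {z : ℤ_[p]} {a b N : ℕ}
    (ha : ‖(a : ℤ_[p]) - z‖ ≤ (p : ℝ) ^ (-N : ℤ)) (hb : ‖(b : ℤ_[p]) - z‖ ≤ (p : ℝ) ^ (-N : ℤ)) :
    a ≡ b [MOD p ^ N] := by
  have h : ‖(((b : ℤ) - a : ℤ) : ℤ_[p])‖ ≤ (p : ℝ) ^ (-N : ℤ) := by
    push_cast
    exact (IsUltrametricDist.dist_triangle_max _ z _).trans
      (max_le hb (by rwa [dist_comm, dist_eq_norm]))
  rw [PadicInt.norm_int_le_pow_iff_dvd] at h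
  rw [Nat.modEq_iff_dvd]
  exact_mod_cast h

variable {K : Type*} [NormedField K] [IsUltrametricDist K] {Q : K}

lemma cauchySeq_pow_of_norm_sub_le (hp : ‖(p : K)‖ < 1) (hQ : ‖1 - Q‖ < 1) {z : ℤ_[p]}
    {n : ℕ → ℕ} (hn : ∀ N, ‖(n N : ℤ_[p]) - z‖ ≤ (p : ℝ) ^ (-N : ℤ)) :
    CauchySeq fun N => Q ^ n N := by
  have hQ1 : ‖Q‖ ≤ 1 := norm_le_one_of_norm_one_sub_le_one hQ.le
  have hmono : ∀ {N k : ℕ}, N ≤ k → ‖(n k : ℤ_[p]) - z‖ ≤ (p : ℝ) ^ (-N : ℤ) := fun hk =>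
    (hn _).trans <| zpow_le_zpow_right₀ (by exact_mod_cast (Fact.out : p.Prime).one_le)
      (by omega)
  refine cauchySeq_of_le_tendsto_0 _ (fun k k' N hk hk' => ?_)
    (tendsto_norm_one_sub_pow_prime_pow Fact.out hp hQ)
  rw [dist_eq_norm]
  exact norm_pow_sub_pow_le_of_modEq hQ1
    (PadicInt.natCast_modEq_of_norm_sub_le (hmono hk) (hmono hk'))

variable [CompleteSpace K]

lemma tendsto_pow_qpow (hp : ‖(p : K)‖ < 1) (hQ : ‖1 - Q‖ < 1) {z : ℤ_[p]} {n : ℕ → ℕ}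
    (hn : ∀ N, ‖(n N : ℤ_[p]) - z‖ ≤ (p : ℝ) ^ (-N : ℤ)) :
    Tendsto (fun N => Q ^ n N) atTop (𝓝 (qpow Q z)) := by
  have hQ1 : ‖Q‖ ≤ 1 := norm_le_one_of_norm_one_sub_le_one hQ.le
  obtain ⟨L, hL⟩ := cauchySeq_tendsto_of_complete
    (cauchySeq_pow_of_norm_sub_le hp hQ (PadicInt.norm_appr_sub_le z))
  have hdiff : Tendsto (fun N => Q ^ n N - Q ^ z.appr N) atTop (𝓝 0) :=
    squeeze_zero_norm (fun N => norm_pow_sub_pow_le_of_modEq hQ1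
      (PadicInt.natCast_modEq_of_norm_sub_le (hn N) (PadicInt.norm_appr_sub_le z N)))
      (tendsto_norm_one_sub_pow_prime_pow Fact.out hp hQ)
  rw [qpow, hL.limUnder_eq]
  simpa using hdiff.add hL

lemma qpow_natCast_mul_s8 (hp : ‖(p : K)‖ < 1) (hQ : ‖1 - Q‖ < 1) (l : ℕ) (z : ℤ_[p]) :
    qpow Q ((l : ℤ_[p]) * z) = qpow Q z ^ l := by
  have hn (N : ℕ) : ‖((l * z.appr N : ℕ) : ℤ_[p]) - l * z‖ ≤ (p : ℝ) ^ (-N : ℤ) := by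
    rw [Nat.cast_mul, ← mul_sub, norm_mul]
    exact (mul_le_of_le_one_left (norm_nonneg _) (PadicInt.norm_le_one _)).trans
      (PadicInt.norm_appr_sub_le z N)
  refine tendsto_nhds_unique (tendsto_pow_qpow hp hQ hn) ?_
  simpa only [pow_mul'] using (tendsto_pow_qpow hp hQ (PadicInt.norm_appr_sub_le z)).pow l

lemma norm_one_sub_qpow_le (hp : ‖(p : K)‖ < 1) (hQ : ‖1 - Q‖ < 1) (z : ℤ_[p]) :
    ‖1 - qpow Q z‖ ≤ ‖1 - Q‖ := by
  have hQ1 : ‖Q‖ ≤ 1 := norm_le_one_of_norm_one_sub_le_one hQ.le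
  exact le_of_tendsto
    (tendsto_const_nhds.sub (tendsto_pow_qpow hp hQ (PadicInt.norm_appr_sub_le z))).norm
    (Eventually.of_forall fun N => norm_one_sub_pow_le hQ1 _)

end Padic

section AltChooseSum

/-- `(-1)^i` times the `i`-th forward difference of `g` at `0`. -/
def altChooseSum {R : Type*} [CommRing R] (i : ℕ) (g : ℕ → R) : R :=
  ∑ l ∈ range (i + 1), (i.choose l : R) * (-1) ^ l * g l

variable {R : Type*} [CommRing R]

lemma altChooseSum_pow (i : ℕ) (x : R) : altChooseSum i (x ^ ·) = (1 - x) ^ i := by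
  rw [altChooseSum, ← neg_add_eq_sub, add_pow]
  refine sum_congr rfl fun l _ => ?_
  rw [neg_pow]
  ring

lemma altChooseSum_add (i : ℕ) (g h : ℕ → R) :
    altChooseSum i (fun l => g l + h l) = altChooseSum i g + altChooseSum i h := by
  simp only [altChooseSum, mul_add, sum_add_distrib]

lemma altChooseSum_mul_left (i : ℕ) (a : R) (g : ℕ → R) :
    altChooseSum i (fun l => a * g l) = a * altChooseSum i g := by
  simp only [altChooseSum, mul_sum]
  exact sum_congr rfl fun l _ => by ring

lemma altChooseSum_sum_mul {ι : Type*} (s : Finset ι) (a : ι → R) (g : ι → ℕ → R) (i : ℕ) :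
    altChooseSum i (fun l => ∑ m ∈ s, a m * g m l) = ∑ m ∈ s, a m * altChooseSum i (g m) := by
  simp only [altChooseSum, mul_sum]
  rw [sum_comm]
  exact sum_congr rfl fun m _ => sum_congr rfl fun l _ => by ring

lemma inv_one_sub_eq_geom_sum_add {F : Type*} [Field F] {y : F} (hy : y ≠ 1) (n : ℕ) :
    (1 - y)⁻¹ = ∑ m ∈ range n, y ^ m + y ^ n * (1 - y)⁻¹ := by
  have h : 1 - y ≠ 0 := sub_ne_zero.mpr hy.symm
  field_simp
  linear_combination geom_sum_mul y n

variable {K : Type*} [NormedField K] [IsUltrametricDist K]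

lemma norm_altChooseSum_le {g : ℕ → K} {C : ℝ} (hC : 0 ≤ C) (hg : ∀ l, ‖g l‖ ≤ C) (i : ℕ) :
    ‖altChooseSum i g‖ ≤ C :=
  norm_sum_le_of_forall_le_of_nonneg hC fun l _ => by
    rw [norm_mul, norm_mul, norm_pow, norm_neg, norm_one, one_pow, mul_one]
    exact (mul_le_of_le_one_left (norm_nonneg _) (norm_natCast_le_one K _)).trans (hg l)

lemma norm_altChooseSum_pow_sub_one_pow_le {r : K} (hr : ‖r‖ ≤ 1) (i m : ℕ) :
    ‖altChooseSum i (fun l => (r ^ l - 1) ^ m)‖ ≤ ‖1 - r‖ ^ i := by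
  have hexpand : (fun l => (r ^ l - 1) ^ m) =
      fun l => ∑ s ∈ range (m + 1), ((-1) ^ (s + m) * m.choose s : K) * (r ^ s) ^ l := by
    funext l
    rw [sub_pow]
    exact sum_congr rfl fun s _ => by rw [one_pow, ← pow_mul, ← pow_mul, mul_comm l s]; ring
  rw [hexpand, altChooseSum_sum_mul]
  refine norm_sum_le_of_forall_le_of_nonneg (by positivity) fun s _ => ?_
  rw [altChooseSum_pow, norm_mul, norm_mul, norm_pow, norm_pow, norm_neg, norm_one, one_pow,
    one_mul]
  exact mul_le_of_le_one_left (by positivity) (norm_natCast_le_one K _) |>.trans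
    (pow_le_pow_left₀ (norm_nonneg _) (norm_one_sub_pow_le hr s) i)

lemma norm_altChooseSum_inv_one_sub_mul_le {r c : K} (hr : ‖1 - r‖ < 1) (hc : ‖c‖ ≤ 1)
    (i : ℕ) : ‖altChooseSum i (fun l => (1 - c * (r ^ l - 1))⁻¹)‖ ≤ ‖1 - r‖ ^ i := by
  have hr1 : ‖r‖ ≤ 1 := norm_le_one_of_norm_one_sub_le_one hr.le
  have hy (l : ℕ) : ‖c * (r ^ l - 1)‖ ≤ ‖1 - r‖ := by
    rw [norm_mul, norm_sub_rev]
    exact (mul_le_of_le_one_left (norm_nonneg _) hc).trans (norm_one_sub_pow_le hr1 l)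
  have hinv (l : ℕ) : ‖(1 - c * (r ^ l - 1))⁻¹‖ = 1 := by
    rw [norm_inv, sub_eq_add_neg, norm_add_eq_max_of_norm_ne_norm, norm_neg, norm_one,
      max_eq_left ((hy l).trans hr.le), inv_one]
    rw [norm_neg, norm_one]
    exact ((hy l).trans_lt hr).ne'
  have hsplit : (fun l => (1 - c * (r ^ l - 1))⁻¹) = fun l =>
      ∑ m ∈ range i, c ^ m * (r ^ l - 1) ^ m +
        (c * (r ^ l - 1)) ^ i * (1 - c * (r ^ l - 1))⁻¹ := by
    funext l
    have hne : c * (r ^ l - 1) ≠ 1 := fun h => by simpa [h] using (hy l).trans_lt hr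
    conv_lhs => rw [inv_one_sub_eq_geom_sum_add hne i]
    simp only [mul_pow]
  rw [hsplit, altChooseSum_add, altChooseSum_sum_mul]
  refine (norm_add_le_max _ _).trans (max_le ?_ ?_)
  · refine norm_sum_le_of_forall_le_of_nonneg (by positivity) fun m _ => ?_
    rw [norm_mul, norm_pow]
    exact (mul_le_of_le_one_left (norm_nonneg _) (pow_le_one₀ (norm_nonneg _) hc)).trans
      (norm_altChooseSum_pow_sub_one_pow_le hr1 i m)
  · refine norm_altChooseSum_le (by positivity) (fun l => ?_) i
    rw [norm_mul, norm_pow, hinv, mul_one]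
    exact pow_le_pow_left₀ (norm_nonneg _) (hy l) i

end AltChooseSum

lemma norm_inv_one_sub_pow_mul_altChooseSum_le {p : ℕ} [Fact p.Prime] {K : Type*} [NormedField K]
    [IsUltrametricDist K] [CompleteSpace K] {Q U : K} (hp : ‖(p : K)‖ < 1) (hQ : ‖1 - Q‖ < 1)
    (hU : 1 ≤ ‖1 - U‖) (a : ℤ_[p]) (i : ℕ) :
    ‖(1 - Q)⁻¹ ^ i * altChooseSum i (fun l => (1 - qpow Q ((l : ℤ_[p]) * a) * U)⁻¹)‖ ≤
      ‖1 - U‖⁻¹ := by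
  set r := qpow Q a
  have hU0 : 1 - U ≠ 0 := norm_pos_iff.mp (one_pos.trans_le hU)
  have hc : ‖U / (1 - U)‖ ≤ 1 := by
    rw [norm_div]
    exact div_le_one_of_le₀ (norm_le_norm_one_sub_of_one_le hU)
      (norm_nonneg _)
  have hrQ : ‖1 - r‖ ≤ ‖1 - Q‖ := norm_one_sub_qpow_le hp hQ a
  have hfactor (l : ℕ) : (1 - qpow Q ((l : ℤ_[p]) * a) * U)⁻¹ =
      (1 - U)⁻¹ * (1 - U / (1 - U) * (r ^ l - 1))⁻¹ := by
    rw [qpow_natCast_mul_s8 hp hQ, ← mul_inv]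
    congr 1
    field_simp
    ring
  simp only [hfactor, altChooseSum_mul_left, norm_mul, norm_pow, norm_inv]
  calc ‖1 - Q‖⁻¹ ^ i * (‖1 - U‖⁻¹ *
        ‖altChooseSum i fun l => (1 - U / (1 - U) * (r ^ l - 1))⁻¹‖)
      ≤ ‖1 - Q‖⁻¹ ^ i * (‖1 - U‖⁻¹ * ‖1 - r‖ ^ i) := by
        gcongr
        exact norm_altChooseSum_inv_one_sub_mul_le (hrQ.trans_lt hQ) hc i
    _ = (‖1 - r‖ / ‖1 - Q‖) ^ i * ‖1 - U‖⁻¹ := by ring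
    _ ≤ ‖1 - U‖⁻¹ :=
        mul_le_of_le_one_left (by positivity)
          (pow_le_one₀ (by positivity) (div_le_one_of_le₀ hrQ (norm_nonneg _)))

theorem norm_H_one_term_le_one_general
    {p : ℕ} [Fact p.Prime] {K : Type*} [NormedField K] [CompleteSpace K]
    [IsUltrametricDist K] (hpK : ‖(p : K)‖ = (p : ℝ)⁻¹)
    (a1 : ℤ_[p])
    (u q : K) (hu : ∀ f : ℕ, 1 ≤ f → 1 ≤ ‖1 - u ^ f‖)
    (hq1 : ‖1 - q‖ < (p : ℝ) ^ (-(1 : ℝ) / ((p : ℝ) - 1)))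
    (f N i x : ℕ) (hx : x < f * p ^ N) :
    ‖u ^ x * (1 - u ^ (f * p ^ N))⁻¹ *
        ((1 - u ^ (f * p ^ N)) * ((1 - q ^ (f * p ^ N))⁻¹) ^ i *
          ∑ l ∈ Finset.range (i + 1),
            (i.choose l : K) * (-1) ^ l *
              (1 - qpow (q ^ (f * p ^ N)) ((l : ℤ_[p]) * a1) * u ^ (f * p ^ N))⁻¹)‖ ≤ 1 := by
  set m := f * p ^ N
  have hp1 : (1 : ℝ) < p := by exact_mod_cast (Fact.out : p.Prime).one_lt
  have hp : ‖(p : K)‖ < 1 := hpK ▸ inv_lt_one_of_one_lt₀ hp1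
  have hq : ‖1 - q‖ < 1 := hq1.trans
    (Real.rpow_lt_one_of_one_lt_of_neg hp1 (div_neg_of_neg_of_pos (by norm_num) (by linarith)))
  have hQ : ‖1 - q ^ m‖ < 1 := (norm_one_sub_pow_le
    (norm_le_one_of_norm_one_sub_le_one hq.le) m).trans_lt hq
  have hU : 1 ≤ ‖1 - u ^ m‖ := hu m (by omega)
  have hH := norm_inv_one_sub_pow_mul_altChooseSum_le hp hQ hU a1 i
  have hux : ‖u‖ ^ x ≤ ‖1 - u ^ m‖ := norm_pow_le_norm_one_sub_pow hx.le hU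
  rw [mul_assoc (1 - u ^ m), mul_assoc (u ^ x),
    inv_mul_cancel_left₀ (norm_pos_iff.mp (one_pos.trans_le hU)), norm_mul, norm_pow]
  calc ‖u‖ ^ x * ‖(1 - q ^ m)⁻¹ ^ i * altChooseSum i _‖
      ≤ ‖1 - u ^ m‖ * ‖1 - u ^ m‖⁻¹ := by gcongr
    _ = 1 := mul_inv_cancel₀ (by positivity)

/-- For `f ≥ 1`, `N ≥ 0`, `i ≥ 0` and `0 ≤ x < f p^N`:
`‖u^x (1 - u^{f p^N})⁻¹ H_i^{(1)}(u^{f p^N}, q^{f p^N} | a_1)‖ ≤ 1`, where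
`H_i^{(1)}(U, Q | a_1) = (1-U)(1-Q)^{-i} ∑_{l=0}^i C(i,l)(-1)^l (1 - Q^{l a_1} U)⁻¹`
with `U = u^{f p^N}` and `Q = q^{f p^N}`. -/
theorem norm_H_one_term_le_one
    {p : ℕ} [Fact p.Prime] {K : Type*} [NormedField K] [CompleteSpace K]
    [IsUltrametricDist K] (hpK : ‖(p : K)‖ = (p : ℝ)⁻¹)
    (a1 : ℤ_[p]) (ha1 : a1 ≠ 0)
    (u q : K) (hu : ∀ f : ℕ, 1 ≤ f → 1 ≤ ‖1 - u ^ f‖)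
    (hq0 : 0 < ‖1 - q‖) (hq1 : ‖1 - q‖ < (p : ℝ) ^ (-(1 : ℝ) / ((p : ℝ) - 1)))
    (f N i x : ℕ) (hf : 1 ≤ f) (hx : x < f * p ^ N) :
    ‖u ^ x * (1 - u ^ (f * p ^ N))⁻¹ *
        ((1 - u ^ (f * p ^ N)) * ((1 - q ^ (f * p ^ N))⁻¹) ^ i *
          ∑ l ∈ Finset.range (i + 1),
            (i.choose l : K) * (-1) ^ l *
              (1 - qpow (q ^ (f * p ^ N)) ((l : ℤ_[p]) * a1) * u ^ (f * p ^ N))⁻¹)‖ ≤ 1 :=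
  norm_H_one_term_le_one_general hpK a1 u q hu hq1 f N i x hx
end
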